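/- Let γ : [0,∞) → [0,∞) be defined by γ(0) = 0, γ(r) = r(1 − log r) for 0 < r < 1/e, and γ(r) = r + 1/e for r ≥ 1/e. Then for every ε with 0 < ε < 1/e and every r ≥ 0, one has γ(r) ≤ −log(ε)·r + ε. -/
import Mathlib


/-- The log-Lipschitz modulus `γ`: `γ(r) = r(1 − log r)` for `0 ≤ r < 1/e` and
`γ(r) = r + 1/e` for `r ≥ 1/e` (note `γ(0) = 0` since `log 0 = 0` in Lean). -/
noncomputable def gam (r : ℝ) : ℝ :=
  if r < (Real.exp 1)⁻¹ then r * (1 - Real.log r) else r + (Real.exp 1)⁻¹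

/-- For every `0 < ε < 1/e` and every `r ≥ 0`, `γ(r) ≤ −log(ε)·r + ε`. -/
theorem gam_le_neg_log_mul_add (ε : ℝ) (hε0 : 0 < ε) (hε1 : ε < (Real.exp 1)⁻¹)
    (r : ℝ) (hr : 0 ≤ r) :
    gam r ≤ -Real.log ε * r + ε := by
  unfold gam
  split_ifs with h
  · rcases eq_or_lt_of_le hr with hr0 | hr0
    · rw [← hr0]
      simp
      linarith
    · have hlog : Real.log (ε / r) ≤ ε / r - 1 :=
        Real.log_le_sub_one_of_pos (by positivity)
      rw [Real.log_div (ne_of_gt hε0) (ne_of_gt hr0)] at hlog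
      have hdr : ε / r * r = ε := div_mul_cancel₀ ε (ne_of_gt hr0)
      nlinarith [mul_le_mul_of_nonneg_right hlog (le_of_lt hr0)]
  · push_neg at h
    have h1 : (0:ℝ) < Real.exp 1 := Real.exp_pos 1
    have hlog : Real.log (Real.exp 1 * ε) ≤ Real.exp 1 * ε - 1 :=
      Real.log_le_sub_one_of_pos (by positivity)
    rw [Real.log_mul (ne_of_gt h1) (ne_of_gt hε0), Real.log_exp] at hlog
    have hL : 1 - Real.exp 1 * ε ≤ -Real.log ε - 1 := by linarith
    have hεe : Real.exp 1 * ε < 1 := by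
      have := (inv_pos.mpr h1)
      calc Real.exp 1 * ε < Real.exp 1 * (Real.exp 1)⁻¹ := by
            exact mul_lt_mul_of_pos_left hε1 h1
        _ = 1 := mul_inv_cancel₀ (ne_of_gt h1)
    have hre : (1 - Real.exp 1 * ε) * (Real.exp 1)⁻¹ ≤ (-Real.log ε - 1) * r := by
      apply mul_le_mul hL h (by positivity) (by linarith)
    have hinv : (Real.exp 1)⁻¹ * Real.exp 1 = 1 := inv_mul_cancel₀ (ne_of_gt h1)
    nlinarith [hre]
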